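/- Let B be a simple bipartite graph with bipartition V(B) = W ⊎ U, G its half-square, D = (T, β_D) a nice tree decomposition of B, and D' = (T, β_{D'}) the derived decomposition of G. Enumerate U = {s_1, …, s_ℓ}, let K_i = N_B(s_i), and for i ∈ {1, …, ℓ} set Z_i = ⋃_{j ≤ i} K_j and F_i = ⋃_{j ≤ i} E(K_j). Then for every cycle S in G and every i ∈ {1, …, ℓ}, there is a cycle S_i in G with V(S_i) = V(S) such that E(S_i) ∖ F_i = E(S) ∖ F_i, and for every node t of T, the number of edges of E(S_i) ∩ F_i with one endpoint in Fake(t) ∩ Z_i and the other endpoint in V(G) ∖ γ_{D'}(t) is at most 4·|β_D(t) ∩ {s_1, …, s_i}|. -/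

import Mathlib

open SimpleGraph

section Defs

variable {V : Type*} {ι : Type*}

/-- `W, U` is a bipartition of the simple graph `B`. -/
def IsBipartition (B : SimpleGraph V) (W U : Set V) : Prop :=
  (∀ v, v ∈ W ∨ v ∈ U) ∧ (∀ v, ¬(v ∈ W ∧ v ∈ U)) ∧
    ∀ ⦃a b⦄, B.Adj a b → (a ∈ W ∧ b ∈ U) ∨ (a ∈ U ∧ b ∈ W)

/-- The half-square of `B` on side `W`: two distinct vertices of `W` are adjacent
iff they have a common neighbor in `B`. -/
def halfSquare (B : SimpleGraph V) (W : Set V) : SimpleGraph V where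
  Adj a b := a ≠ b ∧ a ∈ W ∧ b ∈ W ∧ ∃ s, B.Adj a s ∧ B.Adj b s
  symm := by
    constructor
    rintro a b ⟨hne, ha, hb, s, h1, h2⟩
    exact ⟨hne.symm, hb, ha, s, h2, h1⟩
  loopless := by constructor; rintro a ⟨hne, _⟩; exact hne rfl

/-- Tree decomposition of the graph `H` with vertex set `S`, over the tree `T`. -/
structure IsTreeDecompOn (H : SimpleGraph V) (S : Set V) (T : SimpleGraph ι)
    (β : ι → Set V) : Prop where
  covers : ∀ v ∈ S, ∃ t, v ∈ β t
  edge_mem : ∀ ⦃u v⦄, H.Adj u v → ∃ t, u ∈ β t ∧ v ∈ β t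
  conn : ∀ v ∈ S, (T.induce {t | v ∈ β t}).Connected

/-- `t'` is a descendant of `t` (inclusively) in the tree `T` rooted at `r`:
`t` lies on every path from `t'` to the root. -/
def Desc (T : SimpleGraph ι) (r : ι) (t t' : ι) : Prop :=
  ∀ p : T.Walk t' r, p.IsPath → t ∈ p.support

/-- `γ(t)`: union of the bags of `t` and of all its descendants. -/
def gammaSet (T : SimpleGraph ι) (r : ι) (β : ι → Set V) (t : ι) : Set V :=
  ⋃ t' ∈ {t' | Desc T r t t'}, β t'

/-- The bag of the derived decomposition. -/
def derivedBag (B : SimpleGraph V) (W U : Set V) (T : SimpleGraph ι) (r : ι)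
    (β : ι → Set V) (t : ι) : Set V :=
  (β t ∩ W) ∪ ⋃ s ∈ β t ∩ U, B.neighborSet s ∩ gammaSet T r β t

def originalSet (B : SimpleGraph V) (W U : Set V) (T : SimpleGraph ι) (r : ι)
    (β : ι → Set V) (t : ι) : Set V :=
  β t ∩ derivedBag B W U T r β t

def fakeSet (B : SimpleGraph V) (W U : Set V) (T : SimpleGraph ι) (r : ι)
    (β : ι → Set V) (t : ι) : Set V :=
  derivedBag B W U T r β t \ β t

def cliquesAt (B : SimpleGraph V) (U : Set V) (β : ι → Set V) (t : ι) : Set (Set V) :=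
  {K | ∃ s ∈ β t ∩ U, K = B.neighborSet s}

def IsChild (T : SimpleGraph ι) (r : ι) (t t' : ι) : Prop :=
  T.Adj t t' ∧ Desc T r t t'

def IsLeafNode (T : SimpleGraph ι) (r : ι) (β : ι → Set V) (t : ι) : Prop :=
  (∀ t', ¬ IsChild T r t t') ∧ β t = ∅

def IsForgetNode (T : SimpleGraph ι) (r : ι) (β : ι → Set V) (w : V) (t : ι) : Prop :=
  ∃ t', IsChild T r t t' ∧ (∀ t'', IsChild T r t t'' → t'' = t') ∧
    w ∈ β t' ∧ β t = β t' \ {w}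

def IsIntroduceNode (T : SimpleGraph ι) (r : ι) (β : ι → Set V) (w : V) (t : ι) : Prop :=
  ∃ t', IsChild T r t t' ∧ (∀ t'', IsChild T r t t'' → t'' = t') ∧
    w ∈ β t ∧ β t \ {w} = β t'

def IsJoinNode (T : SimpleGraph ι) (r : ι) (β : ι → Set V) (t : ι) : Prop :=
  ∃ t₁ t₂, t₁ ≠ t₂ ∧ IsChild T r t t₁ ∧ IsChild T r t t₂ ∧
    (∀ t'', IsChild T r t t'' → t'' = t₁ ∨ t'' = t₂) ∧ β t = β t₁ ∧ β t = β t₂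

/-- A nice (rooted) tree decomposition. -/
def IsNice (T : SimpleGraph ι) (r : ι) (β : ι → Set V) : Prop :=
  β r = ∅ ∧ ∀ t, IsLeafNode T r β t ∨ (∃ w, IsForgetNode T r β w t) ∨
    (∃ w, IsIntroduceNode T r β w t) ∨ IsJoinNode T r β t

/-- `E(X)`: edges of `G` with both endpoints in `X`. -/
def edgesIn (G : SimpleGraph V) (X : Set V) : Set (Sym2 V) :=
  {e | e ∈ G.edgeSet ∧ ∀ x ∈ e, x ∈ X}

end Defs

/-!
The sets `γ(t) ∖ β(t)` form a laminar family (in a rooted tree two nodes with a common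
descendant are comparable), so the vertices can be placed on a line, at injective positions
`pos`, such that each of these sets is an interval. Among all cycles obtained from `S` by
changing edges of `F_i` only, take one of least total length `∑ |pos x - pos y|`. An edge
counted at `t` joins `p ∈ Fake(t) ⊆ γ(t) ∖ β(t)` to a vertex `q` of `W` outside `γ_{D'}(t)`;
it lies in a special clique `N_B(s)` with `s = s_j`, `j ≤ i`, and `s ∈ β_D(t)` because `s` is
adjacent in `B` to a vertex below `t` and to one not below `t`. If one clique contained two
such edges leaving the interval on the same side and traversed in the same direction,
replacing them by `p₁p₂` and `q₁q₂` (again edges of the clique, hence of `F_i`) would give a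
shorter cycle. So each `s ∈ β_D(t)` accounts for at most `2 · 2` counted edges.
-/

namespace SimpleGraph

variable {V : Type*} {G : SimpleGraph V}

namespace Walk

lemma exists_eq_append_cons_of_mem_darts {u v : V} {d : G.Dart} :
    ∀ {p : G.Walk u v}, d ∈ p.darts →
      ∃ (q : G.Walk u d.fst) (q' : G.Walk d.snd v), p = q.append (cons d.adj q')
  | cons h p, hd => by
    rcases List.mem_cons.mp hd with rfl | hd
    · exact ⟨nil, p, rfl⟩
    · obtain ⟨q, q', rfl⟩ := exists_eq_append_cons_of_mem_darts hd
      exact ⟨cons h q, q', rfl⟩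

lemma mem_support_dropUntil_or [DecidableEq V] {u v x y : V} :
    ∀ (p : G.Walk u v) (hx : x ∈ p.support) (hy : y ∈ p.support),
      x ∈ (p.dropUntil y hy).support ∨ y ∈ (p.dropUntil x hx).support
  | nil, hx, hy => by
    simp only [support_nil, List.mem_singleton] at hx hy
    subst hx hy
    exact .inl (start_mem_support _)
  | cons h p, hx, hy => by
    by_cases hu : u = y
    · subst hu
      exact .inl (by rw [dropUntil_first]; exact hx)
    by_cases hu' : u = x
    · subst hu'
      exact .inr (by rw [dropUntil_first]; exact hy)
    have hx' : x ∈ p.support := (List.mem_cons.mp hx).resolve_left (Ne.symm hu')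
    have hy' : y ∈ p.support := (List.mem_cons.mp hy).resolve_left (Ne.symm hu)
    simpa only [dropUntil, dif_neg hu, dif_neg hu'] using mem_support_dropUntil_or p hx' hy'

end Walk

namespace Walk.IsCycle

lemma exchange {a b c d : V} {hab : G.Adj a b} {hcd : G.Adj c d} {P₁ : G.Walk b c}
    {P₂ : G.Walk d a} (hC : (cons hab (P₁.append (cons hcd P₂))).IsCycle) (had : a ≠ d)
    (hbc : b ≠ c) (hac : G.Adj a c) (hbd : G.Adj b d) :
    (cons hac (P₁.reverse.append (cons hbd P₂))).IsCycle := by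
  rw [cons_isCycle_iff] at hC ⊢
  have hnd := hC.1.support_nodup
  rw [support_append, support_cons, List.tail_cons, List.nodup_append] at hnd
  obtain ⟨hnd₁, hnd₂, hdisj⟩ := hnd
  refine ⟨?_, fun hmem => ?_⟩
  · rw [isPath_def, support_append, support_reverse, support_cons, List.tail_cons,
      List.nodup_append]
    exact ⟨List.nodup_reverse.mpr hnd₁, hnd₂,
      fun x hx y hy => hdisj x (List.mem_reverse.mp hx) y hy⟩
  · rw [edges_append, edges_reverse, edges_cons] at hmem
    rcases List.mem_append.mp hmem with h | h
    · exact hdisj a (P₁.fst_mem_support_of_mem_edges (List.mem_reverse.mp h)) a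
        P₂.end_mem_support rfl
    rcases List.mem_cons.mp h with h | h
    · rcases Sym2.eq_iff.mp h with ⟨rfl, -⟩ | ⟨rfl, -⟩
      · exact hab.ne rfl
      · exact had rfl
    · exact hdisj c P₁.end_mem_support c (P₂.snd_mem_support_of_mem_edges h) rfl

variable {w : V} {C : G.Walk w w}

lemma dart_eq_of_fst_eq (hC : C.IsCycle) {d₁ d₂ : G.Dart} (h₁ : d₁ ∈ C.darts)
    (h₂ : d₂ ∈ C.darts) (h : d₁.fst = d₂.fst) : d₁ = d₂ := by
  have hnd : (C.darts.map (fun d : G.Dart => d.fst)).Nodup := by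
    rw [map_fst_darts]
    exact hC.nodup_dropLast_support
  exact List.inj_on_of_nodup_map hnd h₁ h₂ h

lemma dart_eq_of_snd_eq (hC : C.IsCycle) {d₁ d₂ : G.Dart} (h₁ : d₁ ∈ C.darts)
    (h₂ : d₂ ∈ C.darts) (h : d₁.snd = d₂.snd) : d₁ = d₂ := by
  have hnd : (C.darts.map (fun d : G.Dart => d.snd)).Nodup := by
    rw [map_snd_darts]
    exact hC.support_nodup
  exact List.inj_on_of_nodup_map hnd h₁ h₂ h

lemma exists_cons_of_mem_darts [DecidableEq V] (hC : C.IsCycle) {a b : V} (hab : G.Adj a b)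
    (h : ⟨(a, b), hab⟩ ∈ C.darts) :
    ∃ P : G.Walk b a, (cons hab P).IsCycle ∧ (∀ x, x ∈ (cons hab P).support ↔ x ∈ C.support) ∧
      (cons hab P).darts.Perm C.darts := by
  have ha : a ∈ C.support := C.dart_fst_mem_support_of_mem_darts h
  obtain ⟨Ca, hCa, hsupp, hdarts⟩ : ∃ Ca : G.Walk a a, Ca.IsCycle ∧
      (∀ x, x ∈ Ca.support ↔ x ∈ C.support) ∧ Ca.darts.Perm C.darts :=
    ⟨C.rotate a ha, hC.rotate ha, fun x => mem_support_rotate_iff .., (rotate_darts ..).perm⟩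
  cases Ca with
  | nil => exact absurd hCa not_isCycle_nil
  | cons h' P =>
    obtain rfl : _ = b := congrArg (fun d : G.Dart => d.snd)
      (hCa.dart_eq_of_fst_eq List.mem_cons_self (hdarts.mem_iff.mpr h) rfl)
    exact ⟨P, hCa, hsupp, hdarts⟩

lemma exists_exchange [DecidableEq V] (hC : C.IsCycle) {a b c d : V} (hab : G.Adj a b)
    (hcd : G.Adj c d) (h₁ : ⟨(a, b), hab⟩ ∈ C.darts) (h₂ : ⟨(c, d), hcd⟩ ∈ C.darts)
    (had : a ≠ d) (hbc : b ≠ c) (hac : G.Adj a c) (hbd : G.Adj b d) :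
    ∃ C' : G.Walk a a, C'.IsCycle ∧ (∀ x, x ∈ C'.support ↔ x ∈ C.support) ∧
      (C'.edges : Multiset (Sym2 V)) + {s(a, b), s(c, d)} = C.edges + {s(a, c), s(b, d)} := by
  obtain ⟨P, hP, hsupp, hdarts⟩ := hC.exists_cons_of_mem_darts hab h₁
  have h₂' : ⟨(c, d), hcd⟩ ∈ P.darts := by
    rcases List.mem_cons.mp (hdarts.mem_iff.mpr h₂) with h | h
    · exact absurd (congrArg (fun d : G.Dart => d.fst) h) hac.ne.symm
    · exact h
  obtain ⟨P₁, P₂, rfl⟩ := exists_eq_append_cons_of_mem_darts h₂'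
  refine ⟨cons hac (P₁.reverse.append (cons hbd P₂)), hP.exchange had hbc hac hbd,
    fun x => ?_, ?_⟩
  · rw [← hsupp]
    simp only [support_cons, support_append, support_reverse, List.tail_cons, List.mem_cons,
      List.mem_append, List.mem_reverse]
  · have hE : (C.edges : Multiset (Sym2 V)) = (cons hab (P₁.append (cons hcd P₂))).edges :=
      (Multiset.coe_eq_coe.mpr (hdarts.map Dart.edge)).symm
    rw [hE]
    simp only [edges_cons, edges_append, edges_reverse, ← Multiset.cons_coe,
      ← Multiset.coe_add, Multiset.coe_reverse]
    simp only [Multiset.insert_eq_cons, ← Multiset.singleton_add]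
    abel

end Walk.IsCycle

end SimpleGraph

section LineLength

variable {V : Type*}

def edgeSpan (pos : V → ℤ) : Sym2 V → ℕ :=
  Sym2.lift ⟨fun x y => (pos x - pos y).natAbs, fun x y => by dsimp only; omega⟩

@[simp]
lemma edgeSpan_mk (pos : V → ℤ) (x y : V) : edgeSpan pos s(x, y) = (pos x - pos y).natAbs :=
  rfl

lemma edgeSpan_neg (pos : V → ℤ) : edgeSpan (fun v => -pos v) = edgeSpan pos := by
  ext e
  induction e using Sym2.ind
  simp only [edgeSpan_mk]
  omega

def IsPosInterval {β : Type*} [Preorder β] (pos : V → β) (D : Set V) : Prop :=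
  ∀ ⦃a b c⦄, a ∈ D → c ∈ D → pos a ≤ pos b → pos b ≤ pos c → b ∈ D

lemma IsPosInterval.neg {pos : V → ℤ} {D : Set V} (hD : IsPosInterval pos D) :
    IsPosInterval (fun v => -pos v) D :=
  fun _ _ _ ha hc hab hbc => hD hc ha (neg_le_neg_iff.mp hbc) (neg_le_neg_iff.mp hab)

lemma IsPosInterval.edgeSpan_exchange_lt {pos : V → ℤ} {D : Set V} (hD : IsPosInterval pos D)
    {p₁ p₂ q₁ q₂ : V} (hp₁ : p₁ ∈ D) (hp₂ : p₂ ∈ D) (hq₁ : q₁ ∉ D) (hq₂ : q₂ ∉ D)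
    (h₁ : pos q₁ < pos p₁) (h₂ : pos q₂ < pos p₂) :
    edgeSpan pos s(p₁, p₂) + edgeSpan pos s(q₁, q₂) <
      edgeSpan pos s(p₁, q₁) + edgeSpan pos s(p₂, q₂) := by
  have h₁₂ : pos q₁ < pos p₂ := lt_of_not_ge fun h => hq₁ (hD hp₂ hp₁ h h₁.le)
  have h₂₁ : pos q₂ < pos p₁ := lt_of_not_ge fun h => hq₂ (hD hp₁ hp₂ h h₂.le)
  simp only [edgeSpan_mk]
  omega

lemma setOf_mem_diff_eq_of_add_eq {α : Type*} {F : Set α} {l₁ l₂ : List α}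
    {s₁ s₂ : Multiset α} (h : (l₁ : Multiset α) + s₁ = l₂ + s₂) (hs₁ : ∀ x ∈ s₁, x ∈ F)
    (hs₂ : ∀ x ∈ s₂, x ∈ F) : {x | x ∈ l₁} \ F = {x | x ∈ l₂} \ F := by
  have key : ∀ {l₁ l₂ : List α} {s₁ s₂ : Multiset α}, (l₁ : Multiset α) + s₁ = l₂ + s₂ →
      (∀ x ∈ s₂, x ∈ F) → {x | x ∈ l₁} \ F ⊆ {x | x ∈ l₂} \ F := by
    intro l₁ l₂ s₁ s₂ h hs₂ x ⟨hx, hxF⟩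
    have hx' : x ∈ (l₂ : Multiset α) + s₂ := h ▸ Multiset.mem_add.mpr (.inl hx)
    rcases Multiset.mem_add.mp hx' with hx' | hx'
    · exact ⟨hx', hxF⟩
    · exact absurd (hs₂ x hx') hxF
  exact (key h hs₂).antisymm (key h.symm hs₁)

end LineLength

namespace SimpleGraph.Walk

variable {V : Type*} {G : SimpleGraph V} {u v w : V}

def lineLength (pos : V → ℤ) (p : G.Walk u v) : ℕ :=
  (p.edges.map (edgeSpan pos)).sum

lemma lineLength_reverse (pos : V → ℤ) (p : G.Walk u v) :
    p.reverse.lineLength pos = p.lineLength pos := by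
  simp only [lineLength, edges_reverse, List.map_reverse, List.sum_reverse]

lemma lineLength_neg (pos : V → ℤ) (p : G.Walk u v) :
    p.lineLength (fun v => -pos v) = p.lineLength pos := by
  simp only [lineLength, edgeSpan_neg]

def IsRerouting (F : Set (Sym2 V)) (C : G.Walk v v) (S : G.Walk w w) : Prop :=
  C.IsCycle ∧ {x | x ∈ C.support} = {x | x ∈ S.support} ∧
    {e | e ∈ C.edges} \ F = {e | e ∈ S.edges} \ F

lemma IsRerouting.trans {F : Set (Sym2 V)} {C₁ : G.Walk u u} {C₂ : G.Walk v v}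
    {C₃ : G.Walk w w} (h₁₂ : IsRerouting F C₁ C₂) (h₂₃ : IsRerouting F C₂ C₃) :
    IsRerouting F C₁ C₃ :=
  ⟨h₁₂.1, h₁₂.2.1.trans h₂₃.2.1, h₁₂.2.2.trans h₂₃.2.2⟩

lemma isRerouting_reverse_iff {F : Set (Sym2 V)} {C' : G.Walk v v} {C : G.Walk w w} :
    IsRerouting F C' C.reverse ↔ IsRerouting F C' C := by
  simp only [IsRerouting, support_reverse, edges_reverse, List.mem_reverse]

def IsLineMinimal (F : Set (Sym2 V)) (pos : V → ℤ) (C : G.Walk w w) : Prop :=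
  ∀ (v : V) (C' : G.Walk v v), IsRerouting F C' C → C.lineLength pos ≤ C'.lineLength pos

lemma exists_isRerouting_isLineMinimal (F : Set (Sym2 V)) (pos : V → ℤ) {S : G.Walk w w}
    (hS : S.IsCycle) : ∃ (v : V) (C : G.Walk v v), IsRerouting F C S ∧ IsLineMinimal F pos C := by
  classical
  have hex : ∃ n, ∃ (v : V) (C : G.Walk v v), IsRerouting F C S ∧ C.lineLength pos = n :=
    ⟨_, w, S, ⟨hS, rfl, rfl⟩, rfl⟩
  obtain ⟨v, C, hCS, hC⟩ := Nat.find_spec hex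
  exact ⟨v, C, hCS, fun v' C' hC' => hC ▸ Nat.find_min' hex ⟨v', C', hC'.trans hCS, rfl⟩⟩

def lowerExitEdges (pos : V → ℤ) (D K : Set V) (p : G.Walk u v) : Set (Sym2 V) :=
  {e | e ∈ p.edges ∧ ∃ x y, e = s(x, y) ∧ x ∈ D ∩ K ∧ y ∈ K \ D ∧ pos y < pos x}

namespace IsLineMinimal

variable {F : Set (Sym2 V)} {pos : V → ℤ} {C : G.Walk w w}

lemma reverse (hmin : IsLineMinimal F pos C) : IsLineMinimal F pos C.reverse := fun v C' h => by
  rw [lineLength_reverse]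
  exact hmin v C' (isRerouting_reverse_iff.mp h)

lemma neg (hmin : IsLineMinimal F pos C) : IsLineMinimal F (fun v => -pos v) C := fun v C' h => by
  simpa only [lineLength_neg] using hmin v C' h

lemma edgeSpan_add_le_of_exchange (hmin : IsLineMinimal F pos C) (hC : C.IsCycle) {a b c d : V}
    (hab : G.Adj a b) (hcd : G.Adj c d) (h₁ : ⟨(a, b), hab⟩ ∈ C.darts)
    (h₂ : ⟨(c, d), hcd⟩ ∈ C.darts) (had : a ≠ d) (hbc : b ≠ c) (hac : G.Adj a c)
    (hbd : G.Adj b d) (habF : s(a, b) ∈ F) (hcdF : s(c, d) ∈ F) (hacF : s(a, c) ∈ F)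
    (hbdF : s(b, d) ∈ F) :
    edgeSpan pos s(a, b) + edgeSpan pos s(c, d) ≤ edgeSpan pos s(a, c) + edgeSpan pos s(b, d) := by
  classical
  obtain ⟨C', hC', hsupp, hE⟩ := hC.exists_exchange hab hcd h₁ h₂ had hbc hac hbd
  have hR : IsRerouting F C' C := ⟨hC', Set.ext hsupp,
    setOf_mem_diff_eq_of_add_eq hE (by simp [habF, hcdF]) (by simp [hacF, hbdF])⟩
  have hle := hmin _ C' hR
  have hsum := congrArg (fun m => (m.map (edgeSpan pos)).sum) hE
  simp only [Multiset.map_add, Multiset.sum_add, Multiset.map_coe, Multiset.sum_coe,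
    Multiset.insert_eq_cons, Multiset.map_cons, Multiset.sum_cons, Multiset.map_singleton,
    Multiset.sum_singleton] at hsum
  simp only [lineLength] at hle
  omega

variable {D K : Set V}

lemma dart_eq_of_lowerExit (hmin : IsLineMinimal F pos C) (hC : C.IsCycle)
    (hD : IsPosInterval pos D) (hK : G.IsClique K)
    (hKF : ∀ ⦃x y⦄, x ∈ K → y ∈ K → G.Adj x y → s(x, y) ∈ F) {d₁ d₂ : G.Dart}
    (hd₁ : d₁ ∈ C.darts) (hd₂ : d₂ ∈ C.darts)
    (h₁ : d₁.fst ∈ D ∩ K ∧ d₁.snd ∈ K \ D ∧ pos d₁.snd < pos d₁.fst)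
    (h₂ : d₂.fst ∈ D ∩ K ∧ d₂.snd ∈ K \ D ∧ pos d₂.snd < pos d₂.fst) : d₁ = d₂ := by
  by_contra hne
  obtain ⟨⟨p₁, q₁⟩, hpq₁⟩ := d₁
  obtain ⟨⟨p₂, q₂⟩, hpq₂⟩ := d₂
  obtain ⟨⟨hp₁D, hp₁K⟩, ⟨hq₁K, hq₁D⟩, hlt₁⟩ := h₁
  obtain ⟨⟨hp₂D, hp₂K⟩, ⟨hq₂K, hq₂D⟩, hlt₂⟩ := h₂
  have hp : p₁ ≠ p₂ := fun h => hne (hC.dart_eq_of_fst_eq hd₁ hd₂ h)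
  have hq : q₁ ≠ q₂ := fun h => hne (hC.dart_eq_of_snd_eq hd₁ hd₂ h)
  have hpp := hK hp₁K hp₂K hp
  have hqq := hK hq₁K hq₂K hq
  have hle := hmin.edgeSpan_add_le_of_exchange hC hpq₁ hpq₂ hd₁ hd₂
    (fun h => hq₂D (h ▸ hp₁D)) (fun h => hq₁D (h ▸ hp₂D)) hpp hqq
    (hKF hp₁K hq₁K hpq₁) (hKF hp₂K hq₂K hpq₂) (hKF hp₁K hp₂K hpp) (hKF hq₁K hq₂K hqq)
  have hlt := hD.edgeSpan_exchange_lt hp₁D hp₂D hq₁D hq₂D hlt₁ hlt₂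
  exact absurd hlt (not_lt.mpr hle)

/-- Of two lower exits with the same orientation along a minimal cycle, a 2-exchange would
shorten it; so there is at most one in each orientation. -/
lemma ncard_lowerExitEdges_le_two (hmin : IsLineMinimal F pos C) (hC : C.IsCycle)
    (hD : IsPosInterval pos D) (hK : G.IsClique K)
    (hKF : ∀ ⦃x y⦄, x ∈ K → y ∈ K → G.Adj x y → s(x, y) ∈ F) :
    (lowerExitEdges pos D K C).ncard ≤ 2 := by
  set exits : G.Walk w w → Set G.Dart := fun C' =>
    {d | d ∈ C'.darts ∧ d.fst ∈ D ∩ K ∧ d.snd ∈ K \ D ∧ pos d.snd < pos d.fst}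
  have hsub : lowerExitEdges pos D K C ⊆ Dart.edge '' exits C ∪ Dart.edge '' exits C.reverse := by
    rintro e ⟨he, x, y, rfl, hx, hy, hxy⟩
    obtain ⟨d, hd, hde⟩ := List.mem_map.mp he
    rcases Sym2.eq_iff.mp hde with ⟨h₁, h₂⟩ | ⟨h₁, h₂⟩
    · exact .inl ⟨d, ⟨hd, h₁ ▸ hx, h₂ ▸ hy, h₁ ▸ h₂ ▸ hxy⟩, hde⟩
    · refine .inr ⟨d.symm, ⟨mem_darts_reverse.mpr (by rwa [Dart.symm_symm]), ?_⟩, ?_⟩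
      · exact ⟨(h₂ ▸ hx : d.snd ∈ D ∩ K), (h₁ ▸ hy : d.fst ∈ K \ D),
          (h₁ ▸ h₂ ▸ hxy : pos d.fst < pos d.snd)⟩
      · rw [Dart.edge_symm, hde]
  have hsingle : ∀ {C' : G.Walk w w}, IsLineMinimal F pos C' → C'.IsCycle →
      (Dart.edge '' exits C').ncard ≤ 1 := by
    intro C' hmin' hC'
    have hsub : (Dart.edge '' exits C').Subsingleton := Set.Subsingleton.image
      (fun _ h₁ _ h₂ => hmin'.dart_eq_of_lowerExit hC' hD hK hKF h₁.1 h₂.1 h₁.2 h₂.2) _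
    exact (Set.ncard_le_one_iff hsub.finite).mpr fun h₁ h₂ => hsub h₁ h₂
  have hfin : ∀ C' : G.Walk w w, (Dart.edge '' exits C').Finite := fun C' =>
    (C'.darts.finite_toSet.subset fun _ hd => hd.1).image _
  calc (lowerExitEdges pos D K C).ncard
      ≤ (Dart.edge '' exits C ∪ Dart.edge '' exits C.reverse).ncard :=
        Set.ncard_le_ncard hsub (.union (hfin C) (hfin C.reverse))
    _ ≤ 1 + 1 := (Set.ncard_union_le _ _).trans
        (add_le_add (hsingle hmin hC) (hsingle hmin.reverse hC.reverse))

end IsLineMinimal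

end SimpleGraph.Walk

section Laminar

variable {α : Type*}

def IsLaminar (𝒟 : Set (Set α)) : Prop :=
  ∀ A ∈ 𝒟, ∀ B ∈ 𝒟, (A ∩ B).Nonempty → A ⊆ B ∨ B ⊆ A

open Classical in
noncomputable def laminarKey : List (Set α) → α → ℕ
  | [], _ => 0
  | D :: l, v => (if v ∈ D then 2 ^ l.length else 0) + laminarKey l v

lemma laminarKey_lt (l : List (Set α)) (v : α) : laminarKey l v < 2 ^ l.length := by
  induction l with
  | nil => simp [laminarKey]
  | cons D l ih =>
    simp only [laminarKey, List.length_cons, pow_succ]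
    split <;> omega

lemma isPosInterval_laminarKey {l : List (Set α)}
    (hl : l.Pairwise fun A B => (A ∩ B).Nonempty → B ⊆ A) {D : Set α} (hD : D ∈ l) :
    IsPosInterval (laminarKey l) D := by
  induction l with
  | nil => simp at hD
  | cons D' l ih =>
    intro a b c ha hc hab hbc
    obtain ⟨hD', hl⟩ := List.pairwise_cons.mp hl
    have hmono : ∀ x y, laminarKey (D' :: l) x ≤ laminarKey (D' :: l) y → x ∈ D' → y ∈ D' := by
      intro x y hxy hx
      by_contra hy
      simp only [laminarKey, if_pos hx, if_neg hy] at hxy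
      have := laminarKey_lt l y
      omega
    rcases List.mem_cons.mp hD with rfl | hD
    · exact hmono a b hab ha
    have hrest : laminarKey l a ≤ laminarKey l b ∧ laminarKey l b ≤ laminarKey l c → b ∈ D :=
      fun h => ih hl hD ha hc h.1 h.2
    by_cases hcD' : c ∈ D'
    · have haD' : a ∈ D' := hD' D hD ⟨c, hcD', hc⟩ ha
      have hbD' := hmono a b hab haD'
      simp only [laminarKey, if_pos haD', if_pos hbD', if_pos hcD'] at hab hbc
      exact hrest ⟨by omega, by omega⟩
    · have hbD' : b ∉ D' := fun h => hcD' (hmono b c hbc h)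
      have haD' : a ∉ D' := fun h => hbD' (hmono a b hab h)
      simp only [laminarKey, if_neg haD', if_neg hbD', if_neg hcD'] at hab hbc
      exact hrest ⟨by omega, by omega⟩

lemma IsLaminar.exists_pairwise_list [Finite α] {𝒟 : Set (Set α)} (h𝒟 : IsLaminar 𝒟) :
    ∃ l : List (Set α), (l.Pairwise fun A B => (A ∩ B).Nonempty → B ⊆ A) ∧ ∀ D ∈ 𝒟, D ∈ l := by
  classical
  set l := (Set.toFinite 𝒟).toFinset.toList.mergeSort fun A B => decide (B.ncard ≤ A.ncard)
  have hmem : ∀ D, D ∈ l ↔ D ∈ 𝒟 := by simp [l]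
  have hsorted : l.Pairwise fun A B => B.ncard ≤ A.ncard := by
    simpa using List.pairwise_mergeSort (le := fun A B : Set α => decide (B.ncard ≤ A.ncard))
      (fun _ _ _ h₁ h₂ => by simp only [decide_eq_true_eq] at *; omega)
      (fun _ _ => by simp only [Bool.or_eq_true, decide_eq_true_eq]; omega) _
  refine ⟨l, hsorted.imp_of_mem fun {A B} hA hB hcard hAB => ?_, fun D hD => (hmem D).mpr hD⟩
  rcases h𝒟 A ((hmem A).mp hA) B ((hmem B).mp hB) hAB with h | h
  · exact (Set.eq_of_subset_of_ncard_le h hcard).symm.subset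
  · exact h

lemma IsLaminar.exists_injective_isPosInterval [Finite α] {𝒟 : Set (Set α)}
    (h𝒟 : IsLaminar 𝒟) :
    ∃ pos : α → ℤ, Function.Injective pos ∧ ∀ D ∈ 𝒟, IsPosInterval pos D := by
  obtain ⟨l, hl, hmem⟩ := h𝒟.exists_pairwise_list
  obtain ⟨n, ⟨e⟩⟩ := Finite.exists_equiv_fin α
  set key := laminarKey l
  -- ties between equal keys are broken by the enumeration `e`
  have hkey : ∀ x y, key x * n + e x ≤ key y * n + e y → key x ≤ key y := by
    intro x y h
    by_contra! hlt
    have := (e y).isLt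
    nlinarith
  refine ⟨fun v => ((key v * n + e v : ℕ) : ℤ), fun x y hxy => ?_,
    fun D hD a b c ha hc hab hbc => ?_⟩
  · have hxy' : key x * n + e x = key y * n + e y := Nat.cast_injective hxy
    have hk : key x = key y := (hkey x y hxy'.le).antisymm (hkey y x hxy'.ge)
    exact e.injective (Fin.ext (by rw [hk] at hxy'; omega))
  · exact isPosInterval_laminarKey hl (hmem D hD) ha hc (hkey a b (Nat.cast_le.mp hab))
      (hkey b c (Nat.cast_le.mp hbc))

end Laminar

section RootedTree

variable {ι : Type*} {T : SimpleGraph ι} {r : ι}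

lemma Desc.trans {t u y : ι} (htu : Desc T r t u) (huy : Desc T r u y) : Desc T r t y := by
  classical
  intro p hp
  have hu := huy p hp
  exact p.support_dropUntil_subset_support hu (htu _ (hp.dropUntil hu))

lemma mem_support_of_desc_of_not_desc {t x y : ι} (hx : Desc T r t x) (hy : ¬Desc T r t y)
    (p : T.Walk x y) : t ∈ p.support := by
  classical
  obtain ⟨q, hq, htq⟩ : ∃ q : T.Walk y r, q.IsPath ∧ t ∉ q.support := by
    simpa only [Desc, not_forall, exists_prop] using hy
  have ht := (p.append q).support_bypass_subset_support (hx _ (p.append q).bypass_isPath)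
  exact ((SimpleGraph.Walk.mem_support_append_iff _ _).mp ht).resolve_right htq

lemma desc_of_mem_support_of_isPath (hT : T.IsAcyclic) {t u : ι} {P : T.Walk u r}
    (hP : P.IsPath) (ht : t ∈ P.support) : Desc T r t u := fun p hp => by
  obtain rfl : p = P := congrArg Subtype.val ((hT.subsingleton_path u r).elim ⟨p, hp⟩ ⟨P, hP⟩)
  exact ht

lemma SimpleGraph.IsTree.desc_antisymm (hT : T.IsTree) {t u : ι} (htu : Desc T r t u)
    (hut : Desc T r u t) : t = u := by
  classical
  obtain ⟨P, hP, -⟩ := hT.existsUnique_path u r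
  have ht := htu P hP
  have hu := hut _ (hP.dropUntil ht)
  by_contra hne
  have hlt := P.length_dropUntil_lt_length ht hne
  have hle := (P.dropUntil t ht).length_dropUntil_le_length hu
  have hP' : (P.dropUntil t ht).dropUntil u hu = P := congrArg Subtype.val
    ((hT.isAcyclic.subsingleton_path u r).elim ⟨_, (hP.dropUntil ht).dropUntil hu⟩ ⟨P, hP⟩)
  rw [hP'] at hle
  omega

lemma SimpleGraph.IsTree.desc_or_desc (hT : T.IsTree) {t u t₀ : ι} (ht : Desc T r t t₀)
    (hu : Desc T r u t₀) : Desc T r t u ∨ Desc T r u t := by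
  classical
  obtain ⟨P, hP, -⟩ := hT.existsUnique_path t₀ r
  exact (P.mem_support_dropUntil_or (ht P hP) (hu P hP)).imp
    (desc_of_mem_support_of_isPath hT.isAcyclic (hP.dropUntil _))
    (desc_of_mem_support_of_isPath hT.isAcyclic (hP.dropUntil _))

end RootedTree

section TreeDecomposition

variable {V ι : Type*} {T : SimpleGraph ι} {r : ι} {β : ι → Set V}

lemma mem_gammaSet_iff {v : V} {t : ι} :
    v ∈ gammaSet T r β t ↔ ∃ t', Desc T r t t' ∧ v ∈ β t' := by
  simp [gammaSet]

namespace IsTreeDecompOn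

variable {H : SimpleGraph V}

lemma mem_bag_of_desc_of_not_desc (hD : IsTreeDecompOn H Set.univ T β) {v : V} {t t₁ t₂ : ι}
    (h₁ : v ∈ β t₁) (h₂ : v ∈ β t₂) (hd : Desc T r t t₁) (hnd : ¬Desc T r t t₂) : v ∈ β t := by
  obtain ⟨p⟩ := (hD.conn v trivial).preconnected ⟨t₁, h₁⟩ ⟨t₂, h₂⟩
  have ht : t ∈ (p.map (Embedding.induce (G := T) {t' | v ∈ β t'}).toHom).support :=
    mem_support_of_desc_of_not_desc hd hnd _
  rw [Walk.support_map] at ht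
  obtain ⟨t', ht', rfl⟩ := List.mem_map.mp ht
  exact t'.2

lemma desc_of_mem_gammaSet_diff (hD : IsTreeDecompOn H Set.univ T β) {v : V} {t t' : ι}
    (hv : v ∈ gammaSet T r β t \ β t) (ht' : v ∈ β t') : Desc T r t t' := by
  obtain ⟨t₁, hd, hv₁⟩ := mem_gammaSet_iff.mp hv.1
  by_contra hnd
  exact hv.2 (hD.mem_bag_of_desc_of_not_desc hv₁ ht' hd hnd)

lemma isLaminar_gammaSet_diff (hD : IsTreeDecompOn H Set.univ T β) (hT : T.IsTree) :
    IsLaminar (Set.range fun t => gammaSet T r β t \ β t) := by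
  have key : ∀ {t u : ι}, Desc T r u t → gammaSet T r β t \ β t ⊆ gammaSet T r β u \ β u := by
    intro t u hut v hv
    refine ⟨?_, fun hvu => ?_⟩
    · obtain ⟨t₁, hd, hv₁⟩ := mem_gammaSet_iff.mp hv.1
      exact mem_gammaSet_iff.mpr ⟨t₁, hut.trans hd, hv₁⟩
    · obtain rfl := hT.desc_antisymm (hD.desc_of_mem_gammaSet_diff hv hvu) hut
      exact hv.2 hvu
  rintro _ ⟨t, rfl⟩ _ ⟨u, rfl⟩ ⟨v, hvt, hvu⟩
  obtain ⟨t₀, hv⟩ := hD.covers v trivial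
  exact (hT.desc_or_desc (hD.desc_of_mem_gammaSet_diff hvt hv)
    (hD.desc_of_mem_gammaSet_diff hvu hv)).symm.imp key key

end IsTreeDecompOn

end TreeDecomposition

section HalfSquare

variable {V ι : Type*} {B : SimpleGraph V} {W U : Set V} {T : SimpleGraph ι} {r : ι}
  {β : ι → Set V}

lemma isClique_halfSquare_neighborSet (s : V) :
    (halfSquare B W).IsClique (B.neighborSet s ∩ W) :=
  fun _ hx _ hy hxy => ⟨hxy, hx.2, hy.2, s, hx.1.symm, hy.1.symm⟩

lemma fakeSet_subset_gammaSet_diff (t : ι) :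
    fakeSet B W U T r β t ⊆ gammaSet T r β t \ β t := by
  rintro p ⟨hp | hp, hpt⟩
  · exact absurd hp.1 hpt
  · obtain ⟨s, -, -, hpγ⟩ := Set.mem_iUnion₂.mp hp
    exact ⟨hpγ, hpt⟩

lemma gammaSet_inter_subset_gammaSet_derivedBag (t : ι) :
    gammaSet T r β t ∩ W ⊆ gammaSet T r (derivedBag B W U T r β) t := by
  rintro v ⟨hv, hvW⟩
  obtain ⟨t', hd, hv⟩ := mem_gammaSet_iff.mp hv
  exact mem_gammaSet_iff.mpr ⟨t', hd, .inl ⟨hv, hvW⟩⟩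

lemma IsTreeDecompOn.mem_bag_of_adj_of_adj (hD : IsTreeDecompOn B Set.univ T β) {t : ι}
    {p q s : V} (hp : p ∈ gammaSet T r β t \ β t)
    (hq : q ∈ W \ gammaSet T r (derivedBag B W U T r β) t) (hps : B.Adj p s)
    (hqs : B.Adj q s) : s ∈ β t := by
  obtain ⟨t₁, hp₁, hs₁⟩ := hD.edge_mem hps
  obtain ⟨t₂, hq₂, hs₂⟩ := hD.edge_mem hqs
  refine hD.mem_bag_of_desc_of_not_desc hs₁ hs₂ (hD.desc_of_mem_gammaSet_diff hp hp₁)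
    fun hd => hq.2 ?_
  exact gammaSet_inter_subset_gammaSet_derivedBag t ⟨mem_gammaSet_iff.mpr ⟨t₂, hd, hq₂⟩, hq.1⟩

variable {pos : V → ℤ} {t : ι} {w : V} {C : (halfSquare B W).Walk w w}

lemma mem_lowerExitEdges_of_fakeSet (hD : IsTreeDecompOn B Set.univ T β)
    (hpos : Function.Injective pos) {s p q : V} (he : s(p, q) ∈ C.edges)
    (hes : s(p, q) ∈ edgesIn (halfSquare B W) (B.neighborSet s))
    (hp : p ∈ fakeSet B W U T r β t) (hq : q ∈ W \ gammaSet T r (derivedBag B W U T r β) t) :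
    s ∈ β t ∧ s(p, q) ∈ C.lowerExitEdges pos (gammaSet T r β t \ β t) (B.neighborSet s ∩ W) ∪
      C.lowerExitEdges (fun v => -pos v) (gammaSet T r β t \ β t) (B.neighborSet s ∩ W) := by
  obtain ⟨hadj, hpq⟩ := hes
  have hpN : p ∈ B.neighborSet s := hpq p (Sym2.mem_mk_left p q)
  have hqN : q ∈ B.neighborSet s := hpq q (Sym2.mem_mk_right p q)
  have hpD := fakeSet_subset_gammaSet_diff t hp
  have hqD : q ∉ gammaSet T r β t \ β t := fun h =>
    hq.2 (gammaSet_inter_subset_gammaSet_derivedBag t ⟨h.1, hq.1⟩)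
  refine ⟨hD.mem_bag_of_adj_of_adj hpD hq hpN.symm hqN.symm, ?_⟩
  have hpK : p ∈ B.neighborSet s ∩ W := ⟨hpN, hadj.2.1⟩
  have hqK : q ∈ B.neighborSet s ∩ W := ⟨hqN, hadj.2.2.1⟩
  rcases lt_or_gt_of_ne (hpos.ne hadj.1) with h | h
  · exact .inr ⟨he, p, q, rfl, ⟨hpD, hpK⟩, ⟨hqK, hqD⟩, neg_lt_neg h⟩
  · exact .inl ⟨he, p, q, rfl, ⟨hpD, hpK⟩, ⟨hqK, hqD⟩, h⟩

lemma ncard_lowerExitEdges_union_le_four {F : Set (Sym2 V)} {D : Set V}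
    (hmin : C.IsLineMinimal F pos) (hC : C.IsCycle) (hD : IsPosInterval pos D) {s : V}
    (hsF : edgesIn (halfSquare B W) (B.neighborSet s) ⊆ F) :
    (C.lowerExitEdges pos D (B.neighborSet s ∩ W) ∪
      C.lowerExitEdges (fun v => -pos v) D (B.neighborSet s ∩ W)).ncard ≤ 4 := by
  have hKF : ∀ ⦃x y⦄, x ∈ B.neighborSet s ∩ W → y ∈ B.neighborSet s ∩ W →
      (halfSquare B W).Adj x y → s(x, y) ∈ F := fun x y hx hy hxy => hsF ⟨hxy, fun z hz => by
    rcases Sym2.mem_iff.mp hz with rfl | rfl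
    exacts [hx.1, hy.1]⟩
  have hK := isClique_halfSquare_neighborSet (B := B) (W := W) s
  exact (Set.ncard_union_le _ _).trans (add_le_add
    (hmin.ncard_lowerExitEdges_le_two hC hD hK hKF)
    (hmin.neg.ncard_lowerExitEdges_le_two hC hD.neg hK hKF))

lemma ncard_fake_exit_edges_le [Finite V] {κ : Type*} (hD : IsTreeDecompOn B Set.univ T β)
    (sv : κ → V) (J : Set κ) (hpos : Function.Injective pos)
    (hint : IsPosInterval pos (gammaSet T r β t \ β t)) (hC : C.IsCycle)
    (hmin : C.IsLineMinimal (⋃ j ∈ J, edgesIn (halfSquare B W) (B.neighborSet (sv j))) pos) :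
    {e | e ∈ C.edges ∧ e ∈ (⋃ j ∈ J, edgesIn (halfSquare B W) (B.neighborSet (sv j))) ∧
      ∃ p q, e = s(p, q) ∧ p ∈ fakeSet B W U T r β t ∧
        q ∈ W \ gammaSet T r (derivedBag B W U T r β) t}.ncard ≤ 4 * (β t ∩ sv '' J).ncard := by
  classical
  set exits : V → Set (Sym2 V) := fun s =>
    C.lowerExitEdges pos (gammaSet T r β t \ β t) (B.neighborSet s ∩ W) ∪
      C.lowerExitEdges (fun v => -pos v) (gammaSet T r β t \ β t) (B.neighborSet s ∩ W)
  have hfin := Set.toFinite (β t ∩ sv '' J)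
  calc _ ≤ (⋃ s ∈ hfin.toFinset, exits s).ncard := by
        refine Set.ncard_le_ncard ?_ (Set.toFinite _)
        rintro e ⟨he, heF, p, q, rfl, hp, hq⟩
        obtain ⟨j, hj, hej⟩ := Set.mem_iUnion₂.mp heF
        obtain ⟨hβ, hexit⟩ := mem_lowerExitEdges_of_fakeSet hD hpos he hej hp hq
        exact Set.mem_biUnion (hfin.mem_toFinset.mpr ⟨hβ, j, hj, rfl⟩) hexit
    _ ≤ ∑ s ∈ hfin.toFinset, (exits s).ncard := Finset.set_ncard_biUnion_le _ _
    _ ≤ ∑ _ ∈ hfin.toFinset, 4 := Finset.sum_le_sum fun s hs => by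
        obtain ⟨-, j, hj, rfl⟩ := hfin.mem_toFinset.mp hs
        exact ncard_lowerExitEdges_union_le_four hmin hC hint
          (Set.subset_biUnion_of_mem (u := fun j => edgesIn _ (B.neighborSet (sv j))) hj)
    _ = 4 * (β t ∩ sv '' J).ncard := by
        rw [Finset.sum_const, smul_eq_mul, mul_comm, Set.ncard_eq_toFinset_card _ hfin]

end HalfSquare

theorem stmt_10_general {V : Type*} {ι : Type*} [Fintype V] (B : SimpleGraph V) (W U : Set V)
    (T : SimpleGraph ι) (r : ι) (hT : T.IsTree) (β : ι → Set V)
    (hD : IsTreeDecompOn B Set.univ T β)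
    (ℓ : ℕ) (sv : Fin ℓ → V)
    (w : V) (S : (halfSquare B W).Walk w w) (hS : S.IsCycle) (i : Fin ℓ) :
    ∃ (w' : V) (S' : (halfSquare B W).Walk w' w'), S'.IsCycle ∧
      {x | x ∈ S'.support} = {x | x ∈ S.support} ∧
      {e | e ∈ S'.edges}
          \ (⋃ j ∈ {j : Fin ℓ | j ≤ i}, edgesIn (halfSquare B W) (B.neighborSet (sv j)))
        = {e | e ∈ S.edges}
          \ (⋃ j ∈ {j : Fin ℓ | j ≤ i}, edgesIn (halfSquare B W) (B.neighborSet (sv j))) ∧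
      ∀ t : ι,
        {e | e ∈ S'.edges ∧
          e ∈ (⋃ j ∈ {j : Fin ℓ | j ≤ i}, edgesIn (halfSquare B W) (B.neighborSet (sv j))) ∧
          ∃ p q, e = s(p, q) ∧
            p ∈ fakeSet B W U T r β t ∩ (⋃ j ∈ {j : Fin ℓ | j ≤ i}, B.neighborSet (sv j)) ∧
            q ∈ W \ gammaSet T r (derivedBag B W U T r β) t}.ncard
          ≤ 4 * (β t ∩ sv '' {j | j ≤ i}).ncard := by
  obtain ⟨pos, hpos, hint⟩ :=
    (hD.isLaminar_gammaSet_diff (r := r) hT).exists_injective_isPosInterval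
  obtain ⟨w', S', ⟨hS', hsupp, hedges⟩, hmin⟩ := Walk.exists_isRerouting_isLineMinimal
    (⋃ j ∈ {j : Fin ℓ | j ≤ i}, edgesIn (halfSquare B W) (B.neighborSet (sv j))) pos hS
  refine ⟨w', S', hS', hsupp, hedges, fun t => le_trans ?_
    (ncard_fake_exit_edges_le (U := U) hD sv _ hpos (hint _ ⟨t, rfl⟩) hS' hmin)⟩
  exact Set.ncard_le_ncard (fun e ⟨he, heF, p, q, hpq, hp, hq⟩ => ⟨he, heF, p, q, hpq, hp.1, hq⟩)
    (Set.toFinite _)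

/-- iterated version over the special cliques `K_1, …, K_ℓ`. For
every cycle `S` and every `i`, there is a cycle `S_i` on the same vertex set,
agreeing with `S` outside `F_i = ⋃_{j ≤ i} E(K_j)`, such that for every node `t`
the number of edges of `E(S_i) ∩ F_i` with one endpoint in `Fake(t) ∩ Z_i` and
the other in `V(G) ∖ γ_{D'}(t)` is at most `4·|β_D(t) ∩ {s_1, …, s_i}|`. -/
theorem stmt_10 {V : Type*} {ι : Type*} [Fintype V] (B : SimpleGraph V) (W U : Set V)
    (hbip : IsBipartition B W U)
    (T : SimpleGraph ι) (r : ι) (hT : T.IsTree) (β : ι → Set V)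
    (hD : IsTreeDecompOn B Set.univ T β) (hnice : IsNice T r β)
    (ℓ : ℕ) (sv : Fin ℓ → V) (hsv : Function.Injective sv) (hU : Set.range sv = U)
    (w : V) (S : (halfSquare B W).Walk w w) (hS : S.IsCycle) (i : Fin ℓ) :
    ∃ (w' : V) (S' : (halfSquare B W).Walk w' w'), S'.IsCycle ∧
      {x | x ∈ S'.support} = {x | x ∈ S.support} ∧
      {e | e ∈ S'.edges}
          \ (⋃ j ∈ {j : Fin ℓ | j ≤ i}, edgesIn (halfSquare B W) (B.neighborSet (sv j)))
        = {e | e ∈ S.edges}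
          \ (⋃ j ∈ {j : Fin ℓ | j ≤ i}, edgesIn (halfSquare B W) (B.neighborSet (sv j))) ∧
      ∀ t : ι,
        {e | e ∈ S'.edges ∧
          e ∈ (⋃ j ∈ {j : Fin ℓ | j ≤ i}, edgesIn (halfSquare B W) (B.neighborSet (sv j))) ∧
          ∃ p q, e = s(p, q) ∧
            p ∈ fakeSet B W U T r β t ∩ (⋃ j ∈ {j : Fin ℓ | j ≤ i}, B.neighborSet (sv j)) ∧
            q ∈ W \ gammaSet T r (derivedBag B W U T r β) t}.ncard
          ≤ 4 * (β t ∩ sv '' {j | j ≤ i}).ncard :=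
  stmt_10_general B W U T r hT β hD ℓ sv w S hS i
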